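/- arXiv:math/9905097 — 3 statements merged into one kernel-verified Lean document; each statement's English description precedes it below -/
import Mathlib

section
/- Let (Γ, m, E, s) be a groupoid in the sense of Zakrzewski and let Γ̃ ⊆ Γ be a subgroupoid, with inclusion relation i given by Gr(i) = {(x, x) : x ∈ Γ̃}. Then: (a) Γ̃ is horizontal if and only if i, viewed as a relation from Γ̃ to Γ (Gr(i) ⊆ Γ × Γ̃), is a morphism of groupoids; (b) Γ̃ is vertical if and only if the transposed relation iᵀ, viewed as a relation from Γ to Γ̃ (Gr(iᵀ) = {(x, x) : x ∈ Γ̃} ⊆ Γ̃ × Γ), is a morphism of groupoids. -/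
/-- A groupoid in the sense of Zakrzewski: `m z x y` means `(z; x, y) ∈ m`,
`E` is the set of identities and `s` is the inverse map. -/
def IsZGroupoid {Γ : Type*} (m : Γ → Γ → Γ → Prop) (E : Set Γ) (s : Γ → Γ) : Prop :=
  (∀ x, s (s x) = x) ∧
  (∀ x y w z, (∃ u, m u x y ∧ m z u w) ↔ (∃ v, m v y w ∧ m z x v)) ∧
  (∀ z x, (∃ a ∈ E, m z a x) ↔ z = x) ∧
  (∀ z x, (∃ a ∈ E, m z x a) ↔ z = x) ∧
  (∀ z x y, m (s z) x y ↔ m z (s y) (s x)) ∧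
  (∀ x, ∃ z, m z (s x) x) ∧
  (∀ x z, m z (s x) x → z ∈ E)

/-- A morphism of Zakrzewski groupoids from `(Γ, m, E, s)` to `(Γ', m', E', s')`:
`h y x` means `(y, x) ∈ Gr(h) ⊆ Γ' × Γ`. -/
def IsZMorphism {Γ Γ' : Type*} (m : Γ → Γ → Γ → Prop) (E : Set Γ) (s : Γ → Γ)
    (m' : Γ' → Γ' → Γ' → Prop) (E' : Set Γ') (s' : Γ' → Γ')
    (h : Γ' → Γ → Prop) : Prop :=
  (∀ y' x₁ x₂, (∃ x, m x x₁ x₂ ∧ h y' x) ↔ (∃ y₁ y₂, h y₁ x₁ ∧ h y₂ x₂ ∧ m' y' y₁ y₂)) ∧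
  (∀ y' x, h y' (s x) ↔ h (s' y') x) ∧
  {y' | ∃ a ∈ E, h y' a} = E'

section ZAux

variable {Γ : Type*} {m : Γ → Γ → Γ → Prop} {E : Set Γ} {s : Γ → Γ}
variable (hG : IsZGroupoid m E s)
include hG

/-- identity on the left absorbs -/
lemma Z.c1L {a z x : Γ} (ha : a ∈ E) (h : m z a x) : z = x :=
  (hG.2.2.1 z x).mp ⟨a, ha, h⟩

/-- identity on the right absorbs -/
lemma Z.c1R {a z x : Γ} (ha : a ∈ E) (h : m z x a) : z = x :=
  (hG.2.2.2.1 z x).mp ⟨a, ha, h⟩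

lemma Z.posE {z x : Γ} (h : m z (s x) x) : z ∈ E := hG.2.2.2.2.2.2 x z h

lemma Z.sE {a : Γ} (ha : a ∈ E) : s a ∈ E := by
  obtain ⟨z, hz0⟩ := hG.2.2.2.2.2.1 (s a)
  have hzE : z ∈ E := Z.posE hG hz0
  have hz : m z a (s a) := by rwa [hG.1] at hz0
  have := Z.c1L hG ha hz
  rwa [this] at hzE

lemma Z.sfix {a : Γ} (ha : a ∈ E) : s a = a := by
  obtain ⟨u, hu⟩ := hG.2.2.2.2.2.1 a
  have h1 : u = a := Z.c1L hG (Z.sE hG ha) hu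
  have h2 : u = s a := Z.c1R hG ha hu
  rw [← h2, h1]

lemma Z.eidem {a : Γ} (ha : a ∈ E) : m a a a := by
  obtain ⟨b, hb, hba⟩ := (hG.2.2.1 a a).mpr rfl
  have : a = b := Z.c1R hG ha hba
  rwa [← this] at hba

/-- if `u = x⁻¹ · x` then `x · u = x`. -/
lemma Z.xxu {u x : Γ} (hu : m u (s x) x) : m x x u := by
  have huE : u ∈ E := Z.posE hG hu
  obtain ⟨v, hv1, hv2⟩ := (hG.2.1 (s x) x u u).mp ⟨u, hu, Z.eidem hG huE⟩
  have : v = x := Z.c1R hG huE hv1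
  rwa [this] at hv1

/-- uniqueness of right identities. -/
lemma Z.uniqRid {b u x : Γ} (hb : b ∈ E) (hxxb : m x x b) (hu : m u (s x) x) : u = b := by
  obtain ⟨p, hp1, hp2⟩ := (hG.2.1 (s x) x b u).mpr ⟨x, hxxb, hu⟩
  exact Z.c1L hG (Z.posE hG hp1) hp2

/-- uniqueness of left identities. -/
lemma Z.uniqL {a a' x : Γ} (ha : a ∈ E) (h : m x a x) (ha' : a' ∈ E) (h' : m x a' x) :
    a = a' := by
  have k : ∀ b, b ∈ E → m x b x → m (s x) (s x) b := by
    intro b hb hbx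
    have h2 : m (s x) (s x) (s b) := by
      refine (hG.2.2.2.2.1 x (s x) (s b)).mpr ?_
      rw [hG.1, hG.1]; exact hbx
    rwa [Z.sfix hG hb] at h2
  obtain ⟨u, hu⟩ := hG.2.2.2.2.2.1 (s x)
  have h1 := Z.uniqRid hG ha (k a ha h) hu
  have h2 := Z.uniqRid hG ha' (k a' ha' h') hu
  rw [← h1, ← h2]

/-- `e_L(y) = y · y⁻¹`. -/
lemma Z.eL_prod (eL : Γ → Γ) (hL : ∀ x, eL x ∈ E ∧ m x (eL x) x) (y : Γ) :
    m (eL y) y (s y) := by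
  obtain ⟨u, hu0⟩ := hG.2.2.2.2.2.1 (s y)
  have huE : u ∈ E := Z.posE hG hu0
  have hu : m u y (s y) := by rwa [hG.1] at hu0
  have hxx : m (s y) (s y) u := Z.xxu hG hu0
  have hy : m y (s u) (s (s y)) := (hG.2.2.2.2.1 y (s y) u).mp hxx
  rw [hG.1, Z.sfix hG huE] at hy
  have : u = eL y := Z.uniqL hG huE hy (hL y).1 (hL y).2
  rwa [this] at hu

/-- if `z = x · y` then `e_L(x)` is a left identity of `z`. -/
lemma Z.eL_comp (eL : Γ → Γ) (hL : ∀ x, eL x ∈ E ∧ m x (eL x) x) {z x y : Γ}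
    (hz : m z x y) : m z (eL x) z := by
  obtain ⟨v, _, hv2⟩ := (hG.2.1 (eL x) x y z).mp ⟨x, (hL x).2, hz⟩
  have : z = v := Z.c1L hG (hL x).1 hv2
  rwa [← this] at hv2

/-- if `z = x · y` and `a` is a left identity for `y`, then `x · a = x`. -/
lemma Z.L3 {z x y a : Γ} (ha : a ∈ E) (hay : m y a y) (hz : m z x y) : m x x a := by
  obtain ⟨u, hu1, hu2⟩ := (hG.2.1 x a y z).mpr ⟨y, hay, hz⟩
  have : u = x := Z.c1R hG ha hu1
  rwa [this] at hu1

/-- uniqueness of the product. -/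
lemma Z.P1 (eL : Γ → Γ) (hL : ∀ x, eL x ∈ E ∧ m x (eL x) x) {z z' x y : Γ}
    (hz : m z x y) (hz' : m z' x y) : z = z' := by
  have haE := (hL y).1
  have hya := (hL y).2
  have hxxa : m x x (eL y) := Z.L3 hG haE hya hz
  obtain ⟨e, he⟩ := hG.2.2.2.2.2.1 x
  have heq : e = eL y := Z.uniqRid hG haE hxxa he
  have hye : m y e y := by rw [heq]; exact hya
  obtain ⟨v, hv, hyv⟩ := (hG.2.1 (s x) x y y).mp ⟨e, he, hye⟩
  have key : ∀ w, m w x y → w = v := by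
    intro w hw
    obtain ⟨u, hu1, hu2⟩ := (hG.2.1 x (s x) v w).mpr ⟨y, hyv, hw⟩
    have hu1' : m u (s (s x)) (s x) := by rw [hG.1]; exact hu1
    exact Z.c1L hG (Z.posE hG hu1') hu2
  rw [key z hz, key z' hz']

end ZAux

/-- For a subgroupoid `Γ̃ = S` of `Γ` with inclusion relation `i`:
(a) `Γ̃` is horizontal (`Ẽ = E`, i.e. `E ∩ S = E`) iff `i : Γ̃ → Γ` is a morphism;
(b) `Γ̃` is vertical (left fibers of its points are contained in `S`) iff
`iᵀ : Γ → Γ̃` is a morphism. -/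
theorem stmt17 {Γ : Type*} (m : Γ → Γ → Γ → Prop) (E : Set Γ) (s : Γ → Γ)
    (hG : IsZGroupoid m E s)
    (eL : Γ → Γ) (hL : ∀ x, eL x ∈ E ∧ m x (eL x) x)
    (S : Set Γ) (hSs : ∀ x ∈ S, s x ∈ S)
    (hsub : IsZGroupoid (fun z p q : S => m z.1 p.1 q.1) {a : S | a.1 ∈ E}
        (fun p : S => ⟨s p.1, hSs p.1 p.2⟩)) :
    (E ∩ S = E ↔
      IsZMorphism (fun z p q : S => m z.1 p.1 q.1) {a : S | a.1 ∈ E}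
        (fun p : S => ⟨s p.1, hSs p.1 p.2⟩) m E s
        (fun y (x : S) => y = x.1)) ∧
    ((∀ x ∈ S, ∀ y, eL y = eL x → y ∈ S) ↔
      IsZMorphism m E s (fun z p q : S => m z.1 p.1 q.1) {a : S | a.1 ∈ E}
        (fun p : S => ⟨s p.1, hSs p.1 p.2⟩)
        (fun (y : S) x => y.1 = x)) := by
  constructor
  · -- part (a)
    constructor
    · -- horizontal → morphism
      intro hES
      have hE : E ⊆ S := by
        intro a ha
        rw [← hES] at ha
        exact ha.2
      refine ⟨?_, ?_, ?_⟩
      · intro y' x₁ x₂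
        constructor
        · rintro ⟨x, hx, rfl⟩
          exact ⟨x₁.1, x₂.1, rfl, rfl, hx⟩
        · rintro ⟨y₁, y₂, rfl, rfl, hm⟩
          -- hm : m y' x₁.1 x₂.1 ; show y' ∈ S via the subgroupoid
          have haE := (hL x₂.1).1
          have hya := (hL x₂.1).2
          have hxxa : m x₁.1 x₁.1 (eL x₂.1) := Z.L3 hG haE hya hm
          have hays : m (eL x₂.1) x₂.1 (s x₂.1) := Z.eL_prod hG eL hL x₂.1
          obtain ⟨u, hu1, _⟩ :=
            (hsub.2.1 x₁ x₂ ⟨s x₂.1, hSs x₂.1 x₂.2⟩ x₁).mpr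
              ⟨⟨eL x₂.1, hE haE⟩, hays, hxxa⟩
          exact ⟨u, hu1, Z.P1 hG eL hL hm hu1⟩
      · intro y' x
        constructor
        · intro h
          show s y' = x.1
          rw [h, hG.1]
        · intro h
          show y' = s x.1
          have : s y' = x.1 := h
          rw [← this, hG.1]
      · ext y'
        simp only [Set.mem_setOf_eq]
        constructor
        · rintro ⟨a, haE, rfl⟩
          exact haE
        · intro hy
          exact ⟨⟨y', hE hy⟩, hy, rfl⟩
    · -- morphism → horizontal
      intro hM
      ext a
      constructor
      · intro ha
        exact ha.1
      · intro ha
        have h3 := hM.2.2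
        rw [← h3] at ha
        obtain ⟨b, hbE, rfl⟩ := ha
        exact ⟨hbE, b.2⟩
  · -- part (b)
    constructor
    · -- vertical → morphism
      intro hV
      refine ⟨?_, ?_, ?_⟩
      · intro y' x₁ x₂
        constructor
        · rintro ⟨x, hx, hy⟩
          have hx' : m y'.1 x₁ x₂ := by rw [hy]; exact hx
          have he1 : eL x₁ = eL y'.1 :=
            Z.uniqL hG (hL x₁).1 (Z.eL_comp hG eL hL hx') (hL y'.1).1 (hL y'.1).2
          have hx1S : x₁ ∈ S := hV y'.1 y'.2 x₁ he1
          have hsx : m (s y'.1) (s x₂) (s x₁) := by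
            refine (hG.2.2.2.2.1 y'.1 (s x₂) (s x₁)).mpr ?_
            rw [hG.1, hG.1]; exact hx'
          have he2 : eL (s x₂) = eL (s y'.1) :=
            Z.uniqL hG (hL (s x₂)).1 (Z.eL_comp hG eL hL hsx) (hL (s y'.1)).1 (hL (s y'.1)).2
          have hx2S' : s x₂ ∈ S := hV (s y'.1) (hSs y'.1 y'.2) (s x₂) he2
          have hx2S : x₂ ∈ S := by
            have := hSs (s x₂) hx2S'
            rwa [hG.1] at this
          exact ⟨⟨x₁, hx1S⟩, ⟨x₂, hx2S⟩, rfl, rfl, hx'⟩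
        · rintro ⟨y₁, y₂, h1, h2, hm⟩
          refine ⟨y'.1, ?_, rfl⟩
          rw [← h1, ← h2]
          exact hm
      · intro y' x
        constructor
        · intro h
          show s y'.1 = x
          rw [show y'.1 = s x from h, hG.1]
        · intro h
          show y'.1 = s x
          have hx : s y'.1 = x := h
          rw [← hx, hG.1]
      · ext y'
        simp only [Set.mem_setOf_eq]
        constructor
        · rintro ⟨a, haE, rfl⟩
          exact haE
        · intro hy
          exact ⟨y'.1, hy, rfl⟩
    · -- morphism → vertical
      intro hM
      intro x hx y hEq
      have haE := (hL x).1
      -- step 1 : eL x ∈ S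
      have haS : eL x ∈ S := by
        obtain ⟨y₁, y₂, h1, h2, hm⟩ :=
          (hM.1 ⟨x, hx⟩ (eL x) x).mp ⟨x, (hL x).2, rfl⟩
        rw [← h1]
        exact y₁.2
      -- step 2 : m (eL x) y (s y), so y is a factor of an element of S
      have hprod : m (eL x) y (s y) := by
        have := Z.eL_prod hG eL hL y
        rwa [hEq] at this
      obtain ⟨y₁, y₂, h1, h2, hm⟩ :=
        (hM.1 ⟨eL x, haS⟩ y (s y)).mp ⟨eL x, hprod, rfl⟩
      rw [← h1]
      exact y₁.2
end

section
/- Let (Γ, m, E, s) be a groupoid in the sense of Zakrzewski and Γ̃ ⊆ Γ a horizontal subgroupoid. Define R := {(x, y) ∈ Γ × Γ : ∃ z ∈ Γ̃, (z; s(x), y) ∈ m}. Then: R is an equivalence relation on Γ; writing Y := Γ/R and [x] for the class of x, the map f : Y → E, f([x]) := e_L(x), is well defined and surjective; the map g : {(x, y) ∈ Γ × Y : e_R(x) = f(y)} → Y, g(x, [x']) := [x·x'], is well defined and surjective; and the relation h with Gr(h) := {((g(x, y), y), x) : x ∈ Γ, y ∈ Y, e_R(x) = f(y)} ⊆ (Y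 × Y) × Γ is a morphism of groupoids from Γ to the pair groupoid Y × Y. -/
section ZHelpers

variable {Γ : Type*} {m : Γ → Γ → Γ → Prop} {E : Set Γ} {s : Γ → Γ} {eL eR : Γ → Γ}
  {mul : Γ → Γ → Γ}

private lemma zsid (hG : IsZGroupoid m E s) {a : Γ} (ha : a ∈ E) : s a = a := by
  obtain ⟨hss, _, hidL, hidR, _, hpos, hposE⟩ := hG
  obtain ⟨e, he⟩ := hpos a
  have heE := hposE a e he
  have h1 : e = s a := (hidR e (s a)).mp ⟨a, ha, he⟩
  subst h1
  exact (hidL (s a) a).mp ⟨s a, heE, he⟩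

private lemma zinv' (hG : IsZGroupoid m E s) (z x y : Γ) : m z x y ↔ m (s z) (s y) (s x) := by
  have h := hG.2.2.2.2.1 z (s y) (s x)
  rw [hG.1, hG.1] at h
  exact h.symm

private lemma zuniqE (hG : IsZGroupoid m E s) {x a b : Γ} (ha : a ∈ E) (hax : m x a x)
    (hb : b ∈ E) (hbx : m x b x) : a = b := by
  obtain ⟨hss, hassoc, hidL, hidR, hinv, hpos, hposE⟩ := hG
  obtain ⟨e, he⟩ := hpos (s x)
  have heE := hposE (s x) e he
  rw [hss] at he
  have key : ∀ c ∈ E, m x c x → c = e := by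
    intro c hc hcx
    obtain ⟨v, hv1, hv2⟩ := (hassoc c x (s x) e).mp ⟨x, hcx, he⟩
    have hev : e = v := (hidL e v).mp ⟨c, hc, hv2⟩
    subst hev
    exact ((hidR e c).mp ⟨e, heE, hv2⟩).symm
  rw [key a ha hax, key b hb hbx]

private lemma zuniqL (hG : IsZGroupoid m E s) (hL : ∀ x, eL x ∈ E ∧ m x (eL x) x)
    {x a : Γ} (ha : a ∈ E) (hax : m x a x) : a = eL x :=
  zuniqE hG ha hax (hL x).1 (hL x).2

private lemma zuniqR (hG : IsZGroupoid m E s) (hR : ∀ x, eR x ∈ E ∧ m x x (eR x))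
    {x a : Γ} (ha : a ∈ E) (hax : m x x a) : a = eR x := by
  have h1 : m (s x) a (s x) := by
    have h := (zinv' hG x x a).mp hax
    rwa [zsid hG ha] at h
  have h2 : m (s x) (eR x) (s x) := by
    have h := (zinv' hG x x (eR x)).mp (hR x).2
    rwa [zsid hG (hR x).1] at h
  exact zuniqE hG ha h1 (hR x).1 h2

private lemma zeLid (hG : IsZGroupoid m E s) (hL : ∀ x, eL x ∈ E ∧ m x (eL x) x)
    {a : Γ} (ha : a ∈ E) : eL a = a :=
  ((hG.2.2.2.1 a (eL a)).mp ⟨a, ha, (hL a).2⟩).symm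

private lemma zeRid (hG : IsZGroupoid m E s) (hR : ∀ x, eR x ∈ E ∧ m x x (eR x))
    {a : Γ} (ha : a ∈ E) : eR a = a :=
  ((hG.2.2.1 a (eR a)).mp ⟨a, ha, (hR a).2⟩).symm

private lemma zeLmul (hG : IsZGroupoid m E s) (hL : ∀ x, eL x ∈ E ∧ m x (eL x) x)
    {z x y : Γ} (h : m z x y) : eL z = eL x := by
  obtain ⟨v, hv1, hv2⟩ := (hG.2.1 (eL x) x y z).mp ⟨x, (hL x).2, h⟩
  have hz : z = v := (hG.2.2.1 z v).mp ⟨eL x, (hL x).1, hv2⟩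
  rw [← hz] at hv2
  exact (zuniqL hG hL (hL x).1 hv2).symm

private lemma zeRmul (hG : IsZGroupoid m E s) (hR : ∀ x, eR x ∈ E ∧ m x x (eR x))
    {z x y : Γ} (h : m z x y) : eR z = eR y := by
  obtain ⟨u, hu1, hu2⟩ := (hG.2.1 x y (eR y) z).mpr ⟨y, (hR y).2, h⟩
  have hz : z = u := (hG.2.2.2.1 z u).mp ⟨eR y, (hR y).1, hu2⟩
  rw [← hz] at hu2
  exact (zuniqR hG hR (hR y).1 hu2).symm

private lemma zeRs (hG : IsZGroupoid m E s) (hL : ∀ x, eL x ∈ E ∧ m x (eL x) x)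
    (hR : ∀ x, eR x ∈ E ∧ m x x (eR x)) (x : Γ) : eR x = eL (s x) := by
  have h := (zinv' hG x x (eR x)).mp (hR x).2
  rw [zsid hG (hR x).1] at h
  exact zuniqL hG hL (hR x).1 h

private lemma zeLs (hG : IsZGroupoid m E s) (hL : ∀ x, eL x ∈ E ∧ m x (eL x) x)
    (hR : ∀ x, eR x ∈ E ∧ m x x (eR x)) (x : Γ) : eL x = eR (s x) := by
  have h := zeRs hG hL hR (s x)
  rw [hG.1] at h
  exact h.symm

private lemma zposR (hG : IsZGroupoid m E s) (hL : ∀ x, eL x ∈ E ∧ m x (eL x) x)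
    (hR : ∀ x, eR x ∈ E ∧ m x x (eR x)) {x e : Γ} (h : m e (s x) x) : e = eR x := by
  have heE := hG.2.2.2.2.2.2 x e h
  have h1 : eL e = eL (s x) := zeLmul hG hL h
  rw [zeLid hG hL heE] at h1
  exact h1.trans (zeRs hG hL hR x).symm

private lemma zcomp (hG : IsZGroupoid m E s) (hL : ∀ x, eL x ∈ E ∧ m x (eL x) x)
    (hR : ∀ x, eR x ∈ E ∧ m x x (eR x)) {z x y : Γ} (h : m z x y) : eR (s x) = eL z := by
  rw [← zeLs hG hL hR x]
  exact (zeLmul hG hL h).symm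

private lemma zmulsz (hG : IsZGroupoid m E s) (hL : ∀ x, eL x ∈ E ∧ m x (eL x) x)
    (hR : ∀ x, eR x ∈ E ∧ m x x (eR x)) (hmul : ∀ x y, eR x = eL y → m (mul x y) x y)
    {z x y : Γ} (h : m z x y) : mul (s x) z = y ∧ eR x = eL y := by
  have hd : eR (s x) = eL z := zcomp hG hL hR h
  have hsz := hmul (s x) z hd
  obtain ⟨u, hu1, hu2⟩ := (hG.2.1 (s x) x y (mul (s x) z)).mpr ⟨z, h, hsz⟩
  have hu : u = eR x := zposR hG hL hR hu1
  have huE : u ∈ E := hG.2.2.2.2.2.2 x u hu1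
  have heq : mul (s x) z = y := (hG.2.2.1 (mul (s x) z) y).mp ⟨u, huE, hu2⟩
  refine ⟨heq, ?_⟩
  rw [hu, heq] at hu2
  exact zuniqL hG hL (hR x).1 hu2

private lemma zmuluniq (hG : IsZGroupoid m E s) (hL : ∀ x, eL x ∈ E ∧ m x (eL x) x)
    (hR : ∀ x, eR x ∈ E ∧ m x x (eR x)) (hmul : ∀ x y, eR x = eL y → m (mul x y) x y)
    {z x y : Γ} (h : m z x y) : z = mul x y := by
  have h1 := (zmulsz hG hL hR hmul h).1
  have h2 : m y (s x) z := by
    have hd : eR (s x) = eL z := zcomp hG hL hR h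
    have hh := hmul (s x) z hd
    rwa [h1] at hh
  have h3 := (zmulsz hG hL hR hmul h2).1
  rw [hG.1] at h3
  exact h3.symm

private lemma zmulassoc (hG : IsZGroupoid m E s) (hL : ∀ x, eL x ∈ E ∧ m x (eL x) x)
    (hR : ∀ x, eR x ∈ E ∧ m x x (eR x)) (hmul : ∀ x y, eR x = eL y → m (mul x y) x y)
    {x₁ x₂ x' : Γ} (h1 : eR x₁ = eL x₂) (h2 : eR x₂ = eL x') :
    mul (mul x₁ x₂) x' = mul x₁ (mul x₂ x') := by
  have ha := hmul x₁ x₂ h1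
  have hb : eR (mul x₁ x₂) = eL x' := (zeRmul hG hR ha).trans h2
  have hc := hmul (mul x₁ x₂) x' hb
  obtain ⟨v, hv1, hv2⟩ := (hG.2.1 x₁ x₂ x' (mul (mul x₁ x₂) x')).mp ⟨mul x₁ x₂, ha, hc⟩
  have hv : v = mul x₂ x' := zmuluniq hG hL hR hmul hv1
  rw [hv] at hv2
  exact zmuluniq hG hL hR hmul hv2

end ZHelpers


/-- For a horizontal subgroupoid `Γ̃ = S` of `Γ`: the relation
`R = {(x, y) : s(x)·y ∈ Γ̃}` is an equivalence relation; on `Y := Γ/R` the maps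
`f([x]) := e_L(x)` (onto `E`) and `g(x, [x']) := [x·x']` are well defined and
surjective; and `Gr(h) := {((g(x, y), y), x) : e_R(x) = f(y)}` is a morphism from
`Γ` to the pair groupoid `Y × Y`. -/
theorem stmt18 {Γ : Type*} (m : Γ → Γ → Γ → Prop) (E : Set Γ) (s : Γ → Γ)
    (hG : IsZGroupoid m E s)
    (eL eR : Γ → Γ)
    (hL : ∀ x, eL x ∈ E ∧ m x (eL x) x) (hR : ∀ x, eR x ∈ E ∧ m x x (eR x))
    (mul : Γ → Γ → Γ) (hmul : ∀ x y, eR x = eL y → m (mul x y) x y)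
    (S : Set Γ) (hSs : ∀ x ∈ S, s x ∈ S)
    (hsub : IsZGroupoid (fun z p q : S => m z.1 p.1 q.1) {a : S | a.1 ∈ E}
        (fun p : S => ⟨s p.1, hSs p.1 p.2⟩))
    (hhor : E ∩ S = E) :
    ∀ r : Γ → Γ → Prop, r = (fun x y => ∃ z ∈ S, m z (s x) y) →
      Equivalence r ∧
      (∀ x y, r x y → eL x = eL y) ∧
      (∀ a ∈ E, ∃ x, eL x = a) ∧
      (∀ x x₁ x₂, eR x = eL x₁ → r x₁ x₂ →
          Quot.mk r (mul x x₁) = Quot.mk r (mul x x₂)) ∧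
      (∀ q : Quot r, ∃ x x', eR x = eL x' ∧ Quot.mk r (mul x x') = q) ∧
      IsZMorphism m E s
        (fun z p q : Quot r × Quot r => p.2 = q.1 ∧ z = (p.1, q.2))
        {p : Quot r × Quot r | p.1 = p.2}
        (fun p : Quot r × Quot r => (p.2, p.1))
        (fun (p : Quot r × Quot r) (x : Γ) =>
          ∃ x', eR x = eL x' ∧ p = (Quot.mk r (mul x x'), Quot.mk r x')) := by
  intro r hr
  subst hr
  set r : Γ → Γ → Prop := fun x y => ∃ z ∈ S, m z (s x) y with hr
  -- E ⊆ S
  have hES : ∀ a ∈ E, a ∈ S := by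
    intro a ha
    have h : a ∈ E ∩ S := by rw [hhor]; exact ha
    exact h.2
  -- closure of S under mul
  have hmulS : ∀ w w', w ∈ S → w' ∈ S → eR w = eL w' → mul w w' ∈ S := by
    intro w w' hw hw' hww
    obtain ⟨zt, hzt⟩ := hsub.2.2.2.2.2.1 ⟨w, hw⟩
    have hz1 : m zt.1 (s w) w := hzt
    have hz : zt.1 = eR w := zposR hG hL hR hz1
    have hW' : m w' zt.1 w' := by rw [hz, hww]; exact (hL w').2
    obtain ⟨v, hv1, hv2⟩ :=
      (hsub.2.1 ⟨s w, hSs w hw⟩ ⟨w, hw⟩ ⟨w', hw'⟩ ⟨w', hw'⟩).mp ⟨zt, hzt, hW'⟩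
    have hv : v.1 = mul w w' := zmuluniq hG hL hR hmul hv1
    rw [← hv]
    exact v.2
  -- equivalence
  have hrefl : ∀ x, r x x := by
    intro x
    obtain ⟨e, he⟩ := hG.2.2.2.2.2.1 x
    exact ⟨e, hES e (hG.2.2.2.2.2.2 x e he), he⟩
  have hsymm : ∀ {x y}, r x y → r y x := by
    rintro x y ⟨z, hzS, hz⟩
    refine ⟨s z, hSs z hzS, ?_⟩
    rw [hG.2.2.2.2.1 z (s y) x, hG.1]
    exact hz
  have htrans : ∀ {x y z}, r x y → r y z → r x z := by
    rintro x y z ⟨w, hwS, hw⟩ ⟨w', hw'S, hw'⟩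
    have h1 : eR w = eL w' := by
      rw [zeRmul hG hR hw, zeLmul hG hL hw']
      exact zeRs hG hL hR y
    refine ⟨mul w w', hmulS w w' hwS hw'S h1, ?_⟩
    have hww := hmul w w' h1
    obtain ⟨v, hv1, hv2⟩ := (hG.2.1 (s x) y w' (mul w w')).mp ⟨w, hw, hww⟩
    obtain ⟨u, hu1, hu2⟩ := (hG.2.1 y (s y) z v).mpr ⟨w', hw', hv1⟩
    have huE : u ∈ E := by
      have h2 : m u (s (s y)) (s y) := by rw [hG.1]; exact hu1
      exact hG.2.2.2.2.2.2 (s y) u h2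
    have hvz : v = z := (hG.2.2.1 v z).mp ⟨u, huE, hu2⟩
    rw [hvz] at hv2
    exact hv2
  have hEquiv : Equivalence r := ⟨hrefl, hsymm, htrans⟩
  have quotEq : ∀ a b : Γ, Quot.mk r a = Quot.mk r b → r a b := by
    intro a b h
    exact hEquiv.eqvGen_iff.mp (Quot.eq.mp h)
  -- f well-defined
  have hreq : ∀ x y, r x y → eL x = eL y := by
    rintro x y ⟨z, _, hz⟩
    have h7 := (zmulsz hG hL hR hmul hz).2
    rw [← h7, ← zeLs hG hL hR x]
  -- g well-defined
  have hg : ∀ x x₁ x₂, eR x = eL x₁ → r x₁ x₂ →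
      Quot.mk r (mul x x₁) = Quot.mk r (mul x x₂) := by
    rintro x x₁ x₂ hx ⟨z, hzS, hz⟩
    apply Quot.sound
    refine ⟨z, hzS, ?_⟩
    have hL12 : eL x₁ = eL x₂ := hreq x₁ x₂ ⟨z, hzS, hz⟩
    have hx2 : eR x = eL x₂ := hx.trans hL12
    have hB := hmul x x₂ hx2
    have hA := hmul x x₁ hx
    have hsA : s (mul x x₁) = mul (s x₁) (s x) := by
      have h := (zinv' hG (mul x x₁) x x₁).mp hA
      exact zmuluniq hG hL hR hmul h
    have hx2' : m x₂ (s x) (mul x x₂) := by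
      have h1 := (zmulsz hG hL hR hmul hB).1
      have hd : eR (s x) = eL (mul x x₂) := zcomp hG hL hR hB
      have h := hmul (s x) (mul x x₂) hd
      rwa [h1] at h
    obtain ⟨u, hu1, hu2⟩ := (hG.2.1 (s x₁) (s x) (mul x x₂) z).mpr ⟨x₂, hx2', hz⟩
    have hu : u = mul (s x₁) (s x) := zmuluniq hG hL hR hmul hu1
    rw [hu, ← hsA] at hu2
    exact hu2
  refine ⟨hEquiv, hreq, fun a ha => ⟨a, zeLid hG hL ha⟩, hg, ?_, ?_, ?_, ?_⟩
  · -- g surjective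
    intro q
    induction q using Quot.ind with
    | _ y =>
      refine ⟨y, eR y, (zeLid hG hL (hR y).1).symm, ?_⟩
      rw [← zmuluniq hG hL hR hmul (hR y).2]
  · -- morphism condition (i)
    intro p x₁ x₂
    constructor
    · rintro ⟨x, hx, x', hx', hp⟩
      have hx12 : eR x₁ = eL x₂ := (zmulsz hG hL hR hmul hx).2
      have hxe : x = mul x₁ x₂ := zmuluniq hG hL hR hmul hx
      have h2' : eR x₂ = eL x' := (zeRmul hG hR hx).symm.trans hx'
      refine ⟨(Quot.mk r (mul x₁ (mul x₂ x')), Quot.mk r (mul x₂ x')),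
        (Quot.mk r (mul x₂ x'), Quot.mk r x'),
        ⟨mul x₂ x', hx12.trans (zeLmul hG hL (hmul x₂ x' h2')).symm, rfl⟩,
        ⟨x', h2', rfl⟩, rfl, ?_⟩
      rw [hp, hxe, zmulassoc hG hL hR hmul hx12 h2']
    · rintro ⟨p₁, p₂, ⟨a, ha1, hp1⟩, ⟨b, hb1, hp2⟩, h12, hpp⟩
      subst hp1; subst hp2
      have h12' : Quot.mk r a = Quot.mk r (mul x₂ b) := h12
      have hab : r a (mul x₂ b) := quotEq _ _ h12'
      have hx12 : eR x₁ = eL x₂ := by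
        rw [ha1, hreq a (mul x₂ b) hab]
        exact zeLmul hG hL (hmul x₂ b hb1)
      refine ⟨mul x₁ x₂, hmul x₁ x₂ hx12, b,
        (zeRmul hG hR (hmul x₁ x₂ hx12)).trans hb1, ?_⟩
      rw [hpp, zmulassoc hG hL hR hmul hx12 hb1]
      have h := hg x₁ a (mul x₂ b) ha1 hab
      show (Quot.mk r (mul x₁ a), Quot.mk r b)
          = (Quot.mk r (mul x₁ (mul x₂ b)), Quot.mk r b)
      rw [h]
  · -- morphism condition (ii)
    have hfwd : ∀ (p : Quot r × Quot r) (x : Γ),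
        (∃ x', eR (s x) = eL x' ∧ p = (Quot.mk r (mul (s x) x'), Quot.mk r x')) →
        (∃ x'', eR x = eL x'' ∧
          (p.2, p.1) = (Quot.mk r (mul x x''), Quot.mk r x'')) := by
      rintro p x ⟨x', hx', hp⟩
      refine ⟨mul (s x) x', ?_, ?_⟩
      · rw [zeLmul hG hL (hmul (s x) x' hx')]
        exact zeRs hG hL hR x
      · have hm := hmul (s x) x' hx'
        have h1 := (zmulsz hG hL hR hmul hm).1
        rw [hG.1] at h1
        rw [hp, h1]
    intro p x
    constructor
    · exact hfwd p x
    · intro hh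
      have hh' : ∃ x', eR (s (s x)) = eL x' ∧
          (p.2, p.1) = (Quot.mk r (mul (s (s x)) x'), Quot.mk r x') := by
        rw [hG.1]; exact hh
      exact hfwd (p.2, p.1) (s x) hh'
  · -- morphism condition (iii)
    ext p
    simp only [Set.mem_setOf_eq]
    constructor
    · rintro ⟨a, haE, x', hax', hp⟩
      have hmm := hmul a x' hax'
      have h : mul a x' = x' := (hG.2.2.1 (mul a x') x').mp ⟨a, haE, hmm⟩
      rw [hp, h]
    · intro hp
      obtain ⟨y, hy⟩ := Quot.exists_rep p.2
      refine ⟨eL y, (hL y).1, y, zeRid hG hR (hL y).1, ?_⟩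
      have hy2 : mul (eL y) y = y := (zmuluniq hG hL hR hmul (hL y).2).symm
      rw [hy2, hy, ← hp]
      exact Prod.ext rfl hp.symm
end

section
/- Let G be a group with subgroups A, B such that A ∩ B = {1} and G = AB, and let a_L, b_R, b_L, a_R be the decomposition maps determined by g = a_L(g)·b_R(g) = b_L(g)·a_R(g). Then the map Ψ : G × G → G × G defined by Ψ(x, y) := (x·a_L(y)⁻¹, b_R(x·a_L(y)⁻¹)·y) is a bijection and satisfies the pentagonal equation Ψ₂₃ ∘ Ψ₁₂ = Ψ₁₂ ∘ Ψ₁₃ ∘ Ψ₂₃ on G × G × G. -/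
/-- For a double group `(G; A, B)` (so `A ∩ B = {1}` and `G = AB`), with decomposition
maps `g = a_L(g)·b_R(g) = b_L(g)·a_R(g)`, the map
`Ψ(x, y) = (x·a_L(y)⁻¹, b_R(x·a_L(y)⁻¹)·y)` is a bijection of `G × G` and satisfies
the pentagonal equation `Ψ₂₃ ∘ Ψ₁₂ = Ψ₁₂ ∘ Ψ₁₃ ∘ Ψ₂₃`. -/
theorem stmt19 {G : Type*} [Group G] (A B : Subgroup G)
    (hAB : A ⊓ B = ⊥) (hG : ∀ g : G, ∃ a ∈ A, ∃ b ∈ B, g = a * b)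
    (aL bR bL aR : G → G)
    (haL : ∀ g, aL g ∈ A) (hbR : ∀ g, bR g ∈ B)
    (hbL : ∀ g, bL g ∈ B) (haR : ∀ g, aR g ∈ A)
    (hdec : ∀ g, g = aL g * bR g) (hdec' : ∀ g, g = bL g * aR g)
    (Ψ : G × G → G × G)
    (hΨ : ∀ x y, Ψ (x, y) = (x * (aL y)⁻¹, bR (x * (aL y)⁻¹) * y))
    (Ψ₁₂ Ψ₁₃ Ψ₂₃ : G × G × G → G × G × G)
    (hΨ₁₂ : ∀ x y z, Ψ₁₂ (x, y, z) = ((Ψ (x, y)).1, (Ψ (x, y)).2, z))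
    (hΨ₂₃ : ∀ x y z, Ψ₂₃ (x, y, z) = (x, (Ψ (y, z)).1, (Ψ (y, z)).2))
    (hΨ₁₃ : ∀ x y z, Ψ₁₃ (x, y, z) = ((Ψ (x, z)).1, y, (Ψ (x, z)).2)) :
    Function.Bijective Ψ ∧ Ψ₂₃ ∘ Ψ₁₂ = Ψ₁₂ ∘ Ψ₁₃ ∘ Ψ₂₃ := by
  -- uniqueness of decompositions
  have uniq : ∀ a ∈ A, ∀ c ∈ B, aL (a * c) = a ∧ bR (a * c) = c := by
    intro a ha c hc
    set g := a * c with hg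
    have h2 : aL g * bR g = a * c := by rw [← hdec g, hg]
    have heq : a⁻¹ * aL g = c * (bR g)⁻¹ := by
      rw [inv_mul_eq_iff_eq_mul, ← mul_assoc, ← h2]
      group
    have hmem : a⁻¹ * aL g ∈ A ⊓ B := by
      refine Subgroup.mem_inf.mpr ⟨mul_mem (inv_mem ha) (haL g), ?_⟩
      rw [heq]
      exact mul_mem hc (inv_mem (hbR g))
    rw [hAB, Subgroup.mem_bot] at hmem
    constructor
    · exact (inv_mul_eq_one.mp hmem).symm
    · have h3 : c * (bR g)⁻¹ = 1 := heq.symm.trans hmem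
      exact (mul_inv_eq_one.mp h3).symm
  have uaL : ∀ a ∈ A, ∀ c ∈ B, aL (a * c) = a := fun a ha c hc => (uniq a ha c hc).1
  have ubR : ∀ a ∈ A, ∀ c ∈ B, bR (a * c) = c := fun a ha c hc => (uniq a ha c hc).2
  constructor
  · -- bijectivity
    apply Function.bijective_iff_has_inverse.mpr
    refine ⟨fun p => (p.1 * aL ((bR p.1)⁻¹ * p.2), (bR p.1)⁻¹ * p.2), ?_, ?_⟩
    · rintro ⟨x, y⟩
      simp [hΨ]
    · rintro ⟨u, v⟩
      simp [hΨ]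
  · -- pentagon
    funext p
    obtain ⟨x, y, z⟩ := p
    simp only [Function.comp_apply, hΨ₂₃, hΨ₁₂, hΨ₁₃, hΨ, Prod.mk.injEq]
    set u := y * (aL z)⁻¹ with hu
    set v := bR u * z with hv
    set x' := x * (aL y)⁻¹ with hx'
    set b := bR x' with hb
    -- step 1 : aL y = aL u * aL v
    have h4 : z⁻¹ * aL z = (bR z)⁻¹ := by
      rw [inv_mul_eq_iff_eq_mul, eq_mul_inv_iff_mul_eq]
      exact (hdec z).symm
    have hbu : bR u = v * z⁻¹ := by rw [hv]; group
    have key1 : y = (aL u * aL v) * (bR v * (bR z)⁻¹) := by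
      calc y = u * aL z := by rw [hu]; group
        _ = aL u * bR u * aL z := by conv_lhs => rw [hdec u]
        _ = aL u * (v * z⁻¹) * aL z := by rw [hbu]
        _ = aL u * (aL v * bR v * z⁻¹) * aL z := by conv_lhs => rw [hdec v]
        _ = (aL u * aL v) * (bR v * (z⁻¹ * aL z)) := by group
        _ = (aL u * aL v) * (bR v * (bR z)⁻¹) := by rw [h4]
    have step1 : aL y = aL u * aL v := by
      conv_lhs => rw [key1]
      exact uaL _ (mul_mem (haL u) (haL v)) _ (mul_mem (hbR v) (inv_mem (hbR z)))
    -- step 3a : bR (b * u) = bR (b * aL u) * bR u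
    have key3a : b * u = aL (b * aL u) * (bR (b * aL u) * bR u) := by
      calc b * u = b * (aL u * bR u) := by conv_lhs => rw [hdec u]
        _ = (b * aL u) * bR u := by group
        _ = (aL (b * aL u) * bR (b * aL u)) * bR u := by conv_lhs => rw [hdec (b * aL u)]
        _ = aL (b * aL u) * (bR (b * aL u) * bR u) := by group
    have step3a : bR (b * u) = bR (b * aL u) * bR u := by
      rw [key3a]
      exact ubR _ (haL _) _ (mul_mem (hbR _) (hbR u))
    -- step 3b : bR (x * (aL v)⁻¹) = bR (b * aL u)
    have key3b : x * (aL v)⁻¹ = (aL x' * aL (b * aL u)) * bR (b * aL u) := by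
      calc x * (aL v)⁻¹ = x' * aL y * (aL v)⁻¹ := by rw [hx']; group
        _ = x' * (aL u * aL v) * (aL v)⁻¹ := by rw [step1]
        _ = x' * aL u := by group
        _ = (aL x' * bR x') * aL u := by conv_lhs => rw [hdec x']
        _ = aL x' * (b * aL u) := by rw [← hb]; group
        _ = (aL x' * aL (b * aL u)) * bR (b * aL u) := by
              conv_lhs => rw [hdec (b * aL u)]
              group
    have step3b : bR (x * (aL v)⁻¹) = bR (b * aL u) := by
      rw [key3b]
      exact ubR _ (mul_mem (haL x') (haL _)) _ (hbR _)
    have e1 : x * (aL v)⁻¹ * (aL u)⁻¹ = x' := by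
      rw [hx', step1]; group
    have e2 : b * y * (aL z)⁻¹ = b * u := by rw [hu]; group
    refine ⟨?_, ?_, ?_⟩
    · exact e1.symm
    · rw [e1, ← hb, hu]; group
    · rw [e2, step3a, step3b, hv]; group
end
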